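/- Let G be a connected signed graph with Gremban expansion 𝒢 and let V(𝒢) = 𝒰₁ ∪ 𝒰₂ be a Gremban-symmetric bipartition. Then the cut-set C(𝒰₁, 𝒰₂) is Gremban-symmetric; if η interchanges 𝒰₁ and 𝒰₂ then π(C(𝒰₁,𝒰₂)) is a frustration set of G, and if η fixes both 𝒰₁ and 𝒰₂ then π(C(𝒰₁,𝒰₂)) is a cut-set of G. Conversely, every cut-set and every frustration set of G lifts to a Gremban-symmetric cut-set of 𝒢, and this correspondence is a bijection. -/

import Mathlib

/-- A signed graph: a simple graph together with a symmetric `±1`-valued sign function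
on its edges. -/
structure SignedGraph (V : Type*) where
  G : SimpleGraph V
  sign : V → V → ℤ
  sign_symm : ∀ u v, sign u v = sign v u
  sign_pm : ∀ u v, G.Adj u v → sign u v = 1 ∨ sign u v = -1

namespace SignedGraph

variable {V : Type*} (S : SignedGraph V)

/-- The Gremban expansion of a signed graph: each vertex `v` is doubled into the two
polarities `(v, true)` (positive) and `(v, false)` (negative); a positive edge lifts to
two edges between equal polarities, and a negative edge to two edges between opposite
polarities. -/
def gremban : SimpleGraph (V × Bool) where
  Adj x y := S.G.Adj x.1 y.1 ∧ ((x.2 = y.2) ↔ S.sign x.1 y.1 = 1)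
  symm := by
    constructor
    rintro ⟨u, a⟩ ⟨v, b⟩ ⟨h, hs⟩
    refine ⟨h.symm, ?_⟩
    rw [S.sign_symm v u, eq_comm]
    exact hs
  loopless := by
    constructor
    rintro ⟨u, a⟩ ⟨h, _⟩
    exact S.G.loopless.irrefl u h

/-- The Gremban involution, swapping the two polarities of every vertex. -/
def eta : V × Bool → V × Bool := fun x => (x.1, !x.2)

end SignedGraph

open SignedGraph

/-- The set of edges of `G` with one endpoint in `A` and the other in `B`. -/
def cutEdges {V : Type*} (G : SimpleGraph V) (A B : Set V) : Set (Sym2 V) :=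
  {e | e ∈ G.edgeSet ∧ ∃ u v, e = s(u, v) ∧ u ∈ A ∧ v ∈ B}

/-- The edge connectivity of a graph: the minimum size of a cut-set over all
bipartitions of the vertex set into two nonempty parts. -/
noncomputable def edgeConn {V : Type*} (G : SimpleGraph V) : ℕ :=
  sInf {n | ∃ A : Set V, A.Nonempty ∧ Aᶜ.Nonempty ∧ (cutEdges G A Aᶜ).ncard = n}

/-- The frustration set of a switching function `θ`: the edges that are negative after
switching by `θ`. -/
def frustEdges {V : Type*} (S : SignedGraph V) (θ : V → ℤ) : Set (Sym2 V) :=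
  {e | e ∈ S.G.edgeSet ∧ ∃ u v, e = s(u, v) ∧ θ u * θ v * S.sign u v = -1}

/-- The frustration index of a signed graph: the minimum size of a frustration set over
all switching functions `θ : V → {±1}`. -/
noncomputable def frustIndex {V : Type*} (S : SignedGraph V) : ℕ :=
  sInf {n | ∃ θ : V → ℤ, (∀ v, θ v = 1 ∨ θ v = -1) ∧ (frustEdges S θ).ncard = n}

/-- A Gremban-symmetric bipartition of the vertex set of the Gremban expansion: two
nonempty, disjoint, covering parts, each mapped onto a part by the Gremban involution. -/
def GrembanSymPartition {V : Type*} (U₁ U₂ : Set (V × Bool)) : Prop :=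
  U₁.Nonempty ∧ U₂.Nonempty ∧ Disjoint U₁ U₂ ∧ U₁ ∪ U₂ = Set.univ ∧
    ((eta '' U₁ = U₁ ∧ eta '' U₂ = U₂) ∨ (eta '' U₁ = U₂ ∧ eta '' U₂ = U₁))

/-- `F` is a cut-set of the signed graph `G`: the set of edges between the two parts of
some bipartition of `V(G)` into nonempty parts. -/
def IsCutSet {V : Type*} (S : SignedGraph V) (F : Set (Sym2 V)) : Prop :=
  ∃ A : Set V, A.Nonempty ∧ Aᶜ.Nonempty ∧ F = cutEdges S.G A Aᶜ

/-- `F` is a frustration set of the signed graph `G`: the set of edges that become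
negative after some switching. -/
def IsFrustSet {V : Type*} (S : SignedGraph V) (F : Set (Sym2 V)) : Prop :=
  ∃ θ : V → ℤ, (∀ v, θ v = 1 ∨ θ v = -1) ∧ F = frustEdges S θ

/-- The collection of Gremban-symmetric cut-sets of the Gremban expansion, i.e. cut-sets
of Gremban-symmetric bipartitions. -/
def symCutSets {V : Type*} (S : SignedGraph V) : Set (Set (Sym2 (V × Bool))) :=
  {C | ∃ U₁ U₂ : Set (V × Bool), GrembanSymPartition U₁ U₂ ∧
    C = cutEdges S.gremban U₁ U₂}

/-!
The involution `η` is an automorphism of the Gremban expansion `𝒢`, so it maps the cut of a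
bipartition onto the cut of the image bipartition; for a Gremban-symmetric bipartition this is the
cut itself. If `η` fixes the parts, then `𝒰₁ = π⁻¹ A` for `A = {v | v⁺ ∈ 𝒰₁}` and the cut projects
onto `C(A, Aᶜ)`. If `η` swaps the parts, then `𝒰₁` contains exactly one of `v⁺, v⁻` for each `v`,
which is a switching `θ`, and an edge `u^a v^b` of `𝒢` with `u^a ∈ 𝒰₁` leaves `𝒰₁` exactly when
`uv` is negative after switching by `θ`. Conversely these constructions lift cut-sets and
frustration sets. Projection is injective on symmetric cuts because the edges of `𝒢` over an edge
of `G` form one `η`-orbit, so a symmetric edge set is the full preimage of its projection.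
-/

lemma cutEdges_comm {V : Type*} (G : SimpleGraph V) (A B : Set V) :
    cutEdges G A B = cutEdges G B A := by
  have key : ∀ A B : Set V, cutEdges G A B ⊆ cutEdges G B A := by
    rintro A B _ ⟨he, u, v, rfl, hu, hv⟩
    exact ⟨he, v, u, Sym2.eq_swap, hv, hu⟩
  exact (key A B).antisymm (key B A)

lemma cutEdges_subset_edgeSet {V : Type*} (G : SimpleGraph V) (A B : Set V) :
    cutEdges G A B ⊆ G.edgeSet :=
  fun _ he => he.1

lemma SimpleGraph.Iso.image_map_cutEdges {V W : Type*} {G : SimpleGraph V}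
    {H : SimpleGraph W} (φ : G ≃g H) (A B : Set V) :
    Sym2.map φ '' cutEdges G A B = cutEdges H (φ '' A) (φ '' B) := by
  ext e
  constructor
  · rintro ⟨_, ⟨he, u, v, rfl, hu, hv⟩, rfl⟩
    exact ⟨φ.map_mem_edgeSet_iff.mpr he, φ u, φ v, rfl, ⟨u, hu, rfl⟩, ⟨v, hv, rfl⟩⟩
  · rintro ⟨he, _, _, rfl, ⟨u, hu, rfl⟩, ⟨v, hv, rfl⟩⟩
    exact ⟨s(u, v), ⟨φ.map_adj_iff.mp he, u, v, rfl, hu, hv⟩, rfl⟩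

lemma GrembanSymPartition.eq_compl {V : Type*} {U₁ U₂ : Set (V × Bool)}
    (h : GrembanSymPartition U₁ U₂) : U₂ = U₁ᶜ :=
  (IsCompl.compl_eq ⟨h.2.2.1, codisjoint_iff.mpr h.2.2.2.1⟩).symm

namespace SignedGraph

variable {V : Type*}

@[simp]
lemma eta_eta (x : V × Bool) : eta (eta x) = x := by
  simp [eta]

lemma eta_involutive : Function.Involutive (eta : V × Bool → V × Bool) := eta_eta

lemma mem_image_eta {U : Set (V × Bool)} {x : V × Bool} : x ∈ eta '' U ↔ eta x ∈ U := by
  rw [eta_involutive.image_eq_preimage_symm]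
  rfl

lemma image_eta_compl (U : Set (V × Bool)) : eta '' Uᶜ = (eta '' U)ᶜ :=
  Set.image_compl_eq eta_involutive.bijective

lemma grembanSymPartition_compl {U : Set (V × Bool)} (hU : U.Nonempty) (hUc : Uᶜ.Nonempty)
    (hη : eta '' U = U ∨ eta '' U = Uᶜ) : GrembanSymPartition U Uᶜ := by
  refine ⟨hU, hUc, disjoint_compl_right, Set.union_compl_self U, ?_⟩
  rw [image_eta_compl]
  rcases hη with hη | hη <;> rw [hη]
  · exact Or.inl ⟨rfl, rfl⟩
  · exact Or.inr ⟨rfl, compl_compl U⟩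

def etaIso (S : SignedGraph V) : S.gremban ≃g S.gremban where
  toEquiv := Function.Involutive.toPerm eta eta_involutive
  map_rel_iff' {x y} := by
    obtain ⟨u, a⟩ := x
    obtain ⟨v, b⟩ := y
    show S.G.Adj u v ∧ (((!a) = (!b)) ↔ S.sign u v = 1) ↔
      S.G.Adj u v ∧ ((a = b) ↔ S.sign u v = 1)
    rw [Bool.not_inj_iff]

lemma map_eta_cutEdges (S : SignedGraph V) {U₁ U₂ : Set (V × Bool)}
    (h : GrembanSymPartition U₁ U₂) :
    Sym2.map eta '' cutEdges S.gremban U₁ U₂ = cutEdges S.gremban U₁ U₂ := by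
  have hη : Sym2.map eta '' cutEdges S.gremban U₁ U₂ =
      cutEdges S.gremban (eta '' U₁) (eta '' U₂) :=
    S.etaIso.image_map_cutEdges U₁ U₂
  rw [hη]
  rcases h.2.2.2.2 with ⟨h₁, h₂⟩ | ⟨h₁, h₂⟩
  · rw [h₁, h₂]
  · rw [h₁, h₂, cutEdges_comm]

lemma exists_gremban_adj {S : SignedGraph V} {u v : V} (h : S.G.Adj u v) (a : Bool) :
    ∃ b, S.gremban.Adj (u, a) (v, b) := by
  rcases S.sign_pm u v h with hs | hs
  · exact ⟨a, h, by simp [hs]⟩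
  · exact ⟨!a, h, by simp [hs]⟩

lemma gremban_lift_eq_or_eq_not {S : SignedGraph V} {u v : V} {a b c d : Bool}
    (h : S.gremban.Adj (u, a) (v, b)) (h' : S.gremban.Adj (u, c) (v, d)) :
    (c = a ∧ d = b) ∨ (c = !a ∧ d = !b) := by
  have hcd : (a = b) ↔ (c = d) := h.2.trans h'.2.symm
  revert hcd
  cases a <;> cases b <;> cases c <;> cases d <;> decide

lemma eq_or_eq_map_eta_of_map_fst_eq {S : SignedGraph V} {e e' : Sym2 (V × Bool)}
    (he : e ∈ S.gremban.edgeSet) (he' : e' ∈ S.gremban.edgeSet)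
    (heq : e.map Prod.fst = e'.map Prod.fst) :
    e' = e ∨ e' = e.map eta := by
  induction e with | h x y => ?_
  induction e' with | h x' y' => ?_
  obtain ⟨u, a⟩ := x; obtain ⟨v, b⟩ := y; obtain ⟨u', c⟩ := x'; obtain ⟨v', d⟩ := y'
  simp only [Sym2.map_mk, Sym2.eq_iff] at heq
  rcases heq with ⟨rfl, rfl⟩ | ⟨rfl, rfl⟩
  · rcases gremban_lift_eq_or_eq_not he he' with ⟨rfl, rfl⟩ | ⟨rfl, rfl⟩
    · exact Or.inl rfl
    · exact Or.inr rfl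
  · rw [Sym2.eq_swap]
    rcases gremban_lift_eq_or_eq_not he (S.gremban.adj_symm he') with ⟨rfl, rfl⟩ | ⟨rfl, rfl⟩
    · exact Or.inl rfl
    · exact Or.inr rfl

lemma eq_inter_preimage_image_map_fst {S : SignedGraph V} {C : Set (Sym2 (V × Bool))}
    (hC : C ⊆ S.gremban.edgeSet) (hη : Sym2.map eta '' C = C) :
    C = S.gremban.edgeSet ∩ Sym2.map Prod.fst ⁻¹' (Sym2.map Prod.fst '' C) := by
  refine (Set.subset_inter hC (Set.subset_preimage_image _ _)).antisymm ?_
  rintro e ⟨he, e', he'C, hfst⟩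
  rcases eq_or_eq_map_eta_of_map_fst_eq (hC he'C) he hfst with rfl | rfl
  · exact he'C
  · exact hη ▸ Set.mem_image_of_mem _ he'C

lemma injOn_image_map_fst_symCutSets (S : SignedGraph V) :
    Set.InjOn (Set.image (Sym2.map Prod.fst)) (symCutSets S) := by
  rintro _ ⟨U₁, U₂, h, rfl⟩ _ ⟨W₁, W₂, h', rfl⟩ heq
  rw [eq_inter_preimage_image_map_fst (cutEdges_subset_edgeSet _ _ _) (S.map_eta_cutEdges h),
    heq, ← eq_inter_preimage_image_map_fst (cutEdges_subset_edgeSet _ _ _)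
      (S.map_eta_cutEdges h')]

lemma image_eta_preimage_fst (A : Set V) : eta '' (Prod.fst ⁻¹' A) = Prod.fst ⁻¹' A := by
  ext x
  exact mem_image_eta

lemma eq_preimage_fst_of_image_eta_eq {U : Set (V × Bool)} (h : eta '' U = U) :
    U = Prod.fst ⁻¹' {v | (v, true) ∈ U} := by
  ext ⟨v, a⟩
  cases a
  · exact (mem_image_eta (x := (v, true))).symm.trans (by rw [h]; rfl)
  · rfl

lemma image_map_fst_cutEdges_preimage_fst (S : SignedGraph V) (A : Set V) :
    Sym2.map Prod.fst '' cutEdges S.gremban (Prod.fst ⁻¹' A) (Prod.fst ⁻¹' A)ᶜ =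
      cutEdges S.G A Aᶜ := by
  ext e
  constructor
  · rintro ⟨_, ⟨he, ⟨u, a⟩, ⟨v, b⟩, rfl, hu, hv⟩, rfl⟩
    exact ⟨he.1, u, v, rfl, hu, hv⟩
  · rintro ⟨he, u, v, rfl, hu, hv⟩
    obtain ⟨b, hadj⟩ := exists_gremban_adj he true
    exact ⟨s((u, true), (v, b)), ⟨hadj, _, _, rfl, hu, hv⟩, rfl⟩

/-- The part swapped by `η` in the bipartition of the Gremban expansion induced by a switching. -/
def switchingLift (θ : V → ℤ) : Set (V × Bool) :=
  {x | θ x.1 = if x.2 then 1 else -1}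

section SwitchingLift

variable {θ : V → ℤ}

lemma exists_mem_switchingLift (hθ : ∀ v, θ v = 1 ∨ θ v = -1) (u : V) :
    ∃ a, (u, a) ∈ switchingLift θ := by
  rcases hθ u with h | h
  · exact ⟨true, h⟩
  · exact ⟨false, h⟩

lemma image_eta_switchingLift (hθ : ∀ v, θ v = 1 ∨ θ v = -1) :
    eta '' switchingLift θ = (switchingLift θ)ᶜ := by
  ext ⟨v, a⟩
  rw [mem_image_eta]
  show θ v = (if !a then 1 else -1) ↔ ¬θ v = (if a then 1 else -1)
  rcases hθ v with h | h <;> cases a <;> simp [h]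

open Classical in
lemma eq_switchingLift_of_image_eta_eq_compl {U : Set (V × Bool)} (h : eta '' U = Uᶜ) :
    U = switchingLift fun v => if (v, true) ∈ U then 1 else -1 := by
  ext ⟨v, a⟩
  cases a
  · have hv : (v, false) ∈ U ↔ (v, true) ∉ U := by
      rw [← Set.mem_compl_iff, ← h, mem_image_eta]
      rfl
    by_cases hvt : (v, true) ∈ U <;> simp [switchingLift, hv, hvt]
  · by_cases hvt : (v, true) ∈ U <;> simp [switchingLift, hvt]

lemma not_mem_switchingLift_iff_of_gremban_adj {S : SignedGraph V}
    (hθ : ∀ v, θ v = 1 ∨ θ v = -1) {u v : V} {a b : Bool}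
    (hadj : S.gremban.Adj (u, a) (v, b)) (hu : (u, a) ∈ switchingLift θ) :
    (v, b) ∉ switchingLift θ ↔ θ u * θ v * S.sign u v = -1 := by
  obtain ⟨hG, hs⟩ := hadj
  change θ u = _ at hu
  change ¬θ v = _ ↔ _
  rcases S.sign_pm u v hG with h | h <;> rcases hθ v with hv | hv <;>
    rw [h] at hs ⊢ <;> cases a <;> cases b <;> simp_all

lemma image_map_fst_cutEdges_switchingLift (S : SignedGraph V)
    (hθ : ∀ v, θ v = 1 ∨ θ v = -1) :
    Sym2.map Prod.fst '' cutEdges S.gremban (switchingLift θ) (switchingLift θ)ᶜ =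
      frustEdges S θ := by
  ext e
  constructor
  · rintro ⟨_, ⟨he, ⟨u, a⟩, ⟨v, b⟩, rfl, hu, hv⟩, rfl⟩
    exact ⟨he.1, u, v, rfl, (not_mem_switchingLift_iff_of_gremban_adj hθ he hu).mp hv⟩
  · rintro ⟨he, u, v, rfl, hfrust⟩
    obtain ⟨a, hu⟩ := exists_mem_switchingLift hθ u
    obtain ⟨b, hadj⟩ := exists_gremban_adj he a
    exact ⟨s((u, a), (v, b)),
      ⟨hadj, _, _, rfl, hu, (not_mem_switchingLift_iff_of_gremban_adj hθ hadj hu).mpr hfrust⟩,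
      rfl⟩

lemma grembanSymPartition_switchingLift [Nonempty V] (hθ : ∀ v, θ v = 1 ∨ θ v = -1) :
    GrembanSymPartition (switchingLift θ) (switchingLift θ)ᶜ := by
  obtain ⟨v⟩ := ‹Nonempty V›
  obtain ⟨a, ha⟩ := exists_mem_switchingLift hθ v
  refine grembanSymPartition_compl ⟨_, ha⟩ ⟨eta (v, a), ?_⟩
    (Or.inr (image_eta_switchingLift hθ))
  rw [← image_eta_switchingLift hθ]
  exact Set.mem_image_of_mem eta ha

end SwitchingLift

lemma grembanSymPartition_preimage_fst {A : Set V} (hA : A.Nonempty) (hAc : Aᶜ.Nonempty) :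
    GrembanSymPartition (Prod.fst ⁻¹' A) (Prod.fst ⁻¹' A)ᶜ :=
  grembanSymPartition_compl ⟨(hA.some, true), hA.some_mem⟩ ⟨(hAc.some, true), hAc.some_mem⟩
    (Or.inl (image_eta_preimage_fst A))

lemma isCutSet_image_map_fst_cutEdges (S : SignedGraph V) {U₁ U₂ : Set (V × Bool)}
    (h : GrembanSymPartition U₁ U₂) (hη : eta '' U₁ = U₁) :
    IsCutSet S (Sym2.map Prod.fst '' cutEdges S.gremban U₁ U₂) := by
  have hU₂ := h.eq_compl
  obtain ⟨⟨x, hx⟩, ⟨y, hy⟩, -⟩ := h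
  subst hU₂
  set A := {v | (v, true) ∈ U₁}
  rw [eq_preimage_fst_of_image_eta_eq hη] at hx hy ⊢
  exact ⟨A, ⟨x.1, hx⟩, ⟨y.1, hy⟩, S.image_map_fst_cutEdges_preimage_fst A⟩

lemma isFrustSet_image_map_fst_cutEdges (S : SignedGraph V) {U₁ U₂ : Set (V × Bool)}
    (h : GrembanSymPartition U₁ U₂) (hη : eta '' U₁ = U₂) :
    IsFrustSet S (Sym2.map Prod.fst '' cutEdges S.gremban U₁ U₂) := by
  classical
  rw [h.eq_compl] at hη ⊢
  set θ : V → ℤ := fun v => if (v, true) ∈ U₁ then 1 else -1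
  have hθ : ∀ v, θ v = 1 ∨ θ v = -1 := fun v => by
    by_cases hv : (v, true) ∈ U₁ <;> simp [θ, hv]
  rw [eq_switchingLift_of_image_eta_eq_compl hη]
  exact ⟨θ, hθ, S.image_map_fst_cutEdges_switchingLift hθ⟩

lemma mapsTo_image_map_fst_symCutSets (S : SignedGraph V) :
    Set.MapsTo (Set.image (Sym2.map Prod.fst)) (symCutSets S)
      {F | IsCutSet S F ∨ IsFrustSet S F} := by
  rintro _ ⟨U₁, U₂, h, rfl⟩
  rcases h.2.2.2.2 with ⟨hη, -⟩ | ⟨hη, -⟩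
  · exact Or.inl (S.isCutSet_image_map_fst_cutEdges h hη)
  · exact Or.inr (S.isFrustSet_image_map_fst_cutEdges h hη)

lemma surjOn_image_map_fst_symCutSets (S : SignedGraph V) [Nonempty V] :
    Set.SurjOn (Set.image (Sym2.map Prod.fst)) (symCutSets S)
      {F | IsCutSet S F ∨ IsFrustSet S F} := by
  rintro F (⟨A, hA, hAc, rfl⟩ | ⟨θ, hθ, rfl⟩)
  · exact ⟨_, ⟨_, _, grembanSymPartition_preimage_fst hA hAc, rfl⟩,
      S.image_map_fst_cutEdges_preimage_fst A⟩
  · exact ⟨_, ⟨_, _, grembanSymPartition_switchingLift hθ, rfl⟩,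
      S.image_map_fst_cutEdges_switchingLift hθ⟩

end SignedGraph

/-- For a connected signed graph `G`: the cut-set of any Gremban-symmetric bipartition
of the Gremban expansion is Gremban-symmetric; if the involution interchanges the parts,
the projected cut-set is a frustration set of `G`, and if it fixes the parts, the
projected cut-set is a cut-set of `G`.  Conversely, projection by `π` is a bijection
between Gremban-symmetric cut-sets of `𝒢` and the cut-sets and frustration sets of `G`. -/
theorem cuts_become_cuts_or_frustration_sets {V : Type*} (S : SignedGraph V)
    (hconn : S.G.Connected) :
    (∀ U₁ U₂ : Set (V × Bool), GrembanSymPartition U₁ U₂ →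
      (Sym2.map eta '' cutEdges S.gremban U₁ U₂ = cutEdges S.gremban U₁ U₂) ∧
      (eta '' U₁ = U₂ → eta '' U₂ = U₁ →
        IsFrustSet S (Sym2.map Prod.fst '' cutEdges S.gremban U₁ U₂)) ∧
      (eta '' U₁ = U₁ → eta '' U₂ = U₂ →
        IsCutSet S (Sym2.map Prod.fst '' cutEdges S.gremban U₁ U₂))) ∧
    Set.BijOn (Set.image (Sym2.map Prod.fst)) (symCutSets S)
      {F | IsCutSet S F ∨ IsFrustSet S F} := by
  have : Nonempty V := hconn.nonempty
  refine ⟨fun U₁ U₂ h => ⟨S.map_eta_cutEdges h, ?_, ?_⟩, S.mapsTo_image_map_fst_symCutSets,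
    S.injOn_image_map_fst_symCutSets, S.surjOn_image_map_fst_symCutSets⟩
  · exact fun hη _ => S.isFrustSet_image_map_fst_cutEdges h hη
  · exact fun hη _ => S.isCutSet_image_map_fst_cutEdges h hη
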